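/- Let Ω ⊂ ℝ³ be a bounded Lipschitz domain and V = {v ∈ (H₀¹(Ω))³ : div v = 0}. Suppose u ∈ V solves the Stokes equation (∇u, ∇v) = (f, v) for all v ∈ V, where f ∈ (L²(Ω))³. If p ∈ H(div; Ω)³ satisfies div p + ∇φ + f = 0 for some φ ∈ H¹(Ω), then for any v ∈ V the Pythagorean identity ‖∇u − ∇v‖² + ‖∇u − p‖² = ‖p − ∇v‖² holds (all norms are L²(Ω) norms). -/

import Mathlib

open MeasureTheory
open scoped RealInnerProductSpace

noncomputable section

/-- Three-dimensional Euclidean space. -/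
abbrev E3 := EuclideanSpace ℝ (Fin 3)

/-- `pd u j x` is the partial derivative `∂_j u (x)` of a vector field `u`. -/
def pd (u : E3 → E3) (j : Fin 3) (x : E3) : E3 :=
  fderiv ℝ u x (EuclideanSpace.single j 1)

/-- Pointwise Frobenius product `∇u(x) · ∇v(x)`. -/
def gradDot (u v : E3 → E3) (x : E3) : ℝ := ∑ j, ⟪pd u j x, pd v j x⟫

/-- Divergence of a vector field. -/
def divg (u : E3 → E3) (x : E3) : ℝ := ∑ j, pd u j x j

/-- Membership in `V = {v ∈ (H₀¹(Ω))³ : div v = 0}` (vector fields vanishing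
outside `Ω` and divergence free). -/
def memV (Ω : Set E3) (u : E3 → E3) : Prop :=
  ContDiff ℝ 1 u ∧ (∀ x ∉ Ω, u x = 0) ∧ ∀ x, divg u x = 0


/-!
Write `w = u - v ∈ V`. Expanding `p - ∇v = (p - ∇u) + ∇w` pointwise, the identity reduces to the
vanishing of the cross term `∫_Ω ∇w : (∇u - p)`. By the Stokes equation `∫_Ω ∇u : ∇w = ∫_Ω f · w`,
and integrating by parts twice with the boundary terms killed by `w = 0` off `Ω`,
`∫_Ω ∇w : p = -∫ w · div p = ∫_Ω w · (∇φ + f) = -∫ (div w) φ + ∫_Ω f · w = ∫_Ω f · w`.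
The first step needs `∇w = 0` almost everywhere off `Ω`, which holds at the Lebesgue density points
of `Ωᶜ`.
-/

theorem Continuous.integrableOn_of_isBounded {X F : Type*} [MetricSpace X] [ProperSpace X]
    [MeasurableSpace X] [OpensMeasurableSpace X] {μ : Measure X} [IsFiniteMeasureOnCompacts μ]
    [NormedAddCommGroup F] {g : X → F} (hg : Continuous g) {s : Set X}
    (hs : Bornology.IsBounded s) : IntegrableOn g s μ :=
  (hg.continuousOn.integrableOn_compact hs.isCompact_closure).mono_set subset_closure

section FiniteDimensional

variable {E : Type*} [NormedAddCommGroup E] [NormedSpace ℝ E] [FiniteDimensional ℝ E]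
  [MeasurableSpace E] [BorelSpace E] (μ : Measure E) [μ.IsAddHaarMeasure]

theorem ae_fderiv_eq_zero_of_eqOn_zero {w : E → E} {s : Set E} (hs : MeasurableSet s)
    (hw : ∀ x ∈ s, DifferentiableAt ℝ w x) (h0 : ∀ x ∈ s, w x = 0) :
    ∀ᵐ x ∂μ.restrict s, fderiv ℝ w x = 0 := by
  have happrox : ApproximatesLinearOn w (0 : E →L[ℝ] E) s 0 := fun x hx y hy => by
    simp [h0 x hx, h0 y hy]
  filter_upwards [happrox.norm_fderiv_sub_le μ hs (fderiv ℝ w)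
    fun x hx => (hw x hx).hasFDerivAt.hasFDerivWithinAt] with x hx
  simpa using hx

theorem HasCompactSupport.integral_fderiv_mul_eq_neg {a b : E → ℝ} (ha : ContDiff ℝ 1 a)
    (hb : ContDiff ℝ 1 b) (hsupp : HasCompactSupport a) (e : E) :
    ∫ x, fderiv ℝ a x e * b x ∂μ = -∫ x, a x * fderiv ℝ b x e ∂μ := by
  have hda : Continuous fun x => fderiv ℝ a x e :=
    (ha.continuous_fderiv one_ne_zero).clm_apply continuous_const
  have hdb : Continuous fun x => fderiv ℝ b x e :=
    (hb.continuous_fderiv one_ne_zero).clm_apply continuous_const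
  rw [eq_neg_iff_add_eq_zero, add_comm, ← eq_neg_iff_add_eq_zero]
  exact integral_mul_fderiv_eq_neg_fderiv_mul_of_integrable
    ((hda.mul hb.continuous).integrable_of_hasCompactSupport (hsupp.fderiv_apply ℝ e).mul_right)
    ((ha.continuous.mul hdb).integrable_of_hasCompactSupport hsupp.mul_right)
    ((ha.continuous.mul hb.continuous).integrable_of_hasCompactSupport hsupp.mul_right)
    (fun x _ => ha.differentiable one_ne_zero x) (fun x _ => hb.differentiable one_ne_zero x)

end FiniteDimensional

theorem fderiv_apply_single_eq_pd {g : E3 → E3} (hg : Differentiable ℝ g) (i j : Fin 3)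
    (x : E3) :
    fderiv ℝ (fun y => g y i) x (EuclideanSpace.single j 1) = pd g j x i := by
  have h := ((EuclideanSpace.proj i : E3 →L[ℝ] ℝ).hasFDerivAt.comp x (hg x).hasFDerivAt).fderiv
  exact congrArg (· (EuclideanSpace.single j 1)) h

theorem pd_sub {u v : E3 → E3} {x : E3} (hu : DifferentiableAt ℝ u x)
    (hv : DifferentiableAt ℝ v x) (j : Fin 3) : pd (u - v) j x = pd u j x - pd v j x := by
  simp [pd, fderiv_sub hu hv]

@[fun_prop]
theorem continuous_pd {g : E3 → E3} (hg : ContDiff ℝ 1 g) (j : Fin 3) : Continuous (pd g j) :=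
  (hg.continuous_fderiv one_ne_zero).clm_apply continuous_const

theorem gradDot_eq_sum (u w : E3 → E3) (x : E3) :
    gradDot u w x = ∑ i, ∑ j, pd u j x i * pd w j x i := by
  simp only [gradDot, PiLp.inner_apply, RCLike.inner_apply, conj_trivial]
  rw [Finset.sum_comm]
  exact Finset.sum_congr rfl fun _ _ => Finset.sum_congr rfl fun _ _ => mul_comm _ _

theorem memV.sub {Ω : Set E3} {u v : E3 → E3} (hu : memV Ω u) (hv : memV Ω v) :
    memV Ω (u - v) := by
  refine ⟨hu.1.sub hv.1, fun x hx => by simp [hu.2.1 x hx, hv.2.1 x hx], fun x => ?_⟩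
  have hdiv := congrArg₂ (· - ·) (hu.2.2 x) (hv.2.2 x)
  simp only [divg, ← Finset.sum_sub_distrib, sub_zero] at hdiv
  simp only [divg, pd_sub (hu.1.differentiable one_ne_zero x) (hv.1.differentiable one_ne_zero x)]
  exact hdiv

theorem memV.hasCompactSupport {Ω : Set E3} {w : E3 → E3} (hw : memV Ω w)
    (hΩ : Bornology.IsBounded Ω) : HasCompactSupport w :=
  HasCompactSupport.intro hΩ.isCompact_closure fun x hx => hw.2.1 x (notMem_of_notMem_closure hx)

theorem memV.ae_pd_eq_zero {Ω : Set E3} {w : E3 → E3} (hw : memV Ω w) (hΩ : IsOpen Ω) :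
    ∀ᵐ x ∂volume.restrict Ωᶜ, ∀ j, pd w j x = 0 := by
  filter_upwards [ae_fderiv_eq_zero_of_eqOn_zero volume hΩ.isClosed_compl.measurableSet
    (fun x _ => hw.1.differentiable one_ne_zero x) hw.2.1] with x hx
  simp [pd, hx]

theorem HasCompactSupport.integral_pd_mul_eq_neg {w : E3 → E3} (hw : ContDiff ℝ 1 w)
    (hsupp : HasCompactSupport w) {b : E3 → ℝ} (hb : ContDiff ℝ 1 b) (i j : Fin 3) :
    ∫ x, pd w j x i * b x = -∫ x, w x i * fderiv ℝ b x (EuclideanSpace.single j 1) := by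
  simpa only [fderiv_apply_single_eq_pd (hw.differentiable one_ne_zero)] using
    (hsupp.comp_left (g := fun y : E3 => y i) rfl).integral_fderiv_mul_eq_neg volume
      ((contDiff_piLp 2).1 hw i) hb (EuclideanSpace.single j 1)

theorem HasCompactSupport.integral_sum_pd_mul_eq_neg_divg {w : E3 → E3} (hw : ContDiff ℝ 1 w)
    (hsupp : HasCompactSupport w) (q : E3 → Fin 3 → E3) (hq : ∀ i, ContDiff ℝ 1 (q · i)) :
    ∫ x, ∑ i, ∑ j, pd w j x i * q x i j = -∫ x, ∑ i, w x i * divg (q · i) x := by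
  have hwi (i : Fin 3) : HasCompactSupport fun x => w x i :=
    hsupp.comp_left (g := fun y : E3 => y i) rfl
  have hpdi (i j : Fin 3) : HasCompactSupport fun x => pd w j x i :=
    (hsupp.fderiv_apply ℝ (EuclideanSpace.single j 1)).comp_left (g := fun y : E3 => y i) rfl
  have hint_left (i j : Fin 3) : Integrable fun x => pd w j x i * q x i j :=
    (by fun_prop : Continuous _).integrable_of_hasCompactSupport (hpdi i j).mul_right
  have hint_right (i j : Fin 3) : Integrable fun x => w x i * pd (q · i) j x j :=
    (by fun_prop : Continuous _).integrable_of_hasCompactSupport (hwi i).mul_right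
  simp only [divg, Finset.mul_sum]
  rw [integral_finsetSum _ fun i _ => integrable_finsetSum _ fun j _ => hint_left i j,
    integral_finsetSum _ fun i _ => integrable_finsetSum _ fun j _ => hint_right i j,
    ← Finset.sum_neg_distrib]
  refine Finset.sum_congr rfl fun i _ => ?_
  rw [integral_finsetSum _ fun j _ => hint_left i j,
    integral_finsetSum _ fun j _ => hint_right i j, ← Finset.sum_neg_distrib]
  refine Finset.sum_congr rfl fun j _ => ?_
  rw [hsupp.integral_pd_mul_eq_neg hw ((contDiff_piLp 2).1 (hq i) j)]
  simp only [fderiv_apply_single_eq_pd ((hq i).differentiable one_ne_zero)]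

theorem HasCompactSupport.integral_sum_mul_fderiv_eq_neg_divg_mul {w : E3 → E3}
    (hw : ContDiff ℝ 1 w) (hsupp : HasCompactSupport w) {ψ : E3 → ℝ} (hψ : ContDiff ℝ 1 ψ) :
    ∫ x, ∑ i, w x i * fderiv ℝ ψ x (EuclideanSpace.single i 1) = -∫ x, divg w x * ψ x := by
  have hwi (i : Fin 3) : HasCompactSupport fun x => w x i :=
    hsupp.comp_left (g := fun y : E3 => y i) rfl
  have hpdi (i : Fin 3) : HasCompactSupport fun x => pd w i x i :=
    (hsupp.fderiv_apply ℝ (EuclideanSpace.single i 1)).comp_left (g := fun y : E3 => y i) rfl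
  have hdψ : Continuous fun x => fderiv ℝ ψ x := hψ.continuous_fderiv one_ne_zero
  have hint_left (i : Fin 3) :
      Integrable fun x => w x i * fderiv ℝ ψ x (EuclideanSpace.single i 1) :=
    (by fun_prop : Continuous _).integrable_of_hasCompactSupport (hwi i).mul_right
  have hint_right (i : Fin 3) : Integrable fun x => pd w i x i * ψ x :=
    (by fun_prop : Continuous _).integrable_of_hasCompactSupport (hpdi i).mul_right
  simp only [divg, Finset.sum_mul]
  rw [integral_finsetSum _ fun i _ => hint_left i, integral_finsetSum _ fun i _ => hint_right i,
    ← Finset.sum_neg_distrib]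
  exact Finset.sum_congr rfl fun i _ => by rw [hsupp.integral_pd_mul_eq_neg hw hψ, neg_neg]

theorem setIntegral_sum_pd_mul_eq_setIntegral_inner {Ω : Set E3} (hΩo : IsOpen Ω)
    (hΩb : Bornology.IsBounded Ω) (f : E3 → E3) (p : E3 → Fin 3 → E3) (φ : E3 → ℝ)
    (hp : ∀ i, ContDiff ℝ 1 (fun y => p y i)) (hφ : ContDiff ℝ 1 φ)
    (heq : ∀ x ∈ Ω, ∀ i : Fin 3,
      divg (fun y => p y i) x + fderiv ℝ φ x (EuclideanSpace.single i 1) + f x i = 0)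
    {w : E3 → E3} (hw : memV Ω w) :
    ∫ x in Ω, ∑ i, ∑ j, pd w j x i * p x i j = ∫ x in Ω, ⟪f x, w x⟫ := by
  have hsupp := hw.hasCompactSupport hΩb
  set g := fun x => ∑ i, w x i * divg (fun y => p y i) x
  set h := fun x => ∑ i, w x i * fderiv ℝ φ x (EuclideanSpace.single i 1)
  have hg_off : ∀ x ∉ Ω, g x = 0 := fun x hx => by simp [g, hw.2.1 x hx]
  have hh_off : ∀ x ∉ Ω, h x = 0 := fun x hx => by simp [h, hw.2.1 x hx]
  have hw_C1 : ContDiff ℝ 1 w := hw.1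
  have hg : Continuous g := by simp only [g, divg]; fun_prop
  have hh : Continuous h := by fun_prop
  have hinner : ∀ x ∈ Ω, ⟪f x, w x⟫ = -(g x + h x) := fun x hx => by
    simp only [g, h, PiLp.inner_apply, RCLike.inner_apply, conj_trivial, ← Finset.sum_add_distrib,
      ← Finset.sum_neg_distrib]
    refine Finset.sum_congr rfl fun i _ => ?_
    linear_combination (w x i) * heq x hx i
  calc ∫ x in Ω, ∑ i, ∑ j, pd w j x i * p x i j
      = ∫ x, ∑ i, ∑ j, pd w j x i * p x i j := by
        refine setIntegral_eq_integral_of_ae_compl_eq_zero ?_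
        filter_upwards [(ae_restrict_iff' hΩo.isClosed_compl.measurableSet).1
          (hw.ae_pd_eq_zero hΩo)] with x hx hxΩ
        simp [hx hxΩ]
    _ = -(∫ x, g x) - ∫ x, h x := by
        rw [hsupp.integral_sum_pd_mul_eq_neg_divg hw.1 p hp,
          hsupp.integral_sum_mul_fderiv_eq_neg_divg_mul hw.1 hφ]
        simp only [hw.2.2, zero_mul, integral_zero, neg_zero, sub_zero]
        rfl
    _ = ∫ x in Ω, -(g x + h x) := by
        rw [integral_neg,
          integral_add (hg.integrableOn_of_isBounded hΩb) (hh.integrableOn_of_isBounded hΩb),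
          setIntegral_eq_integral_of_forall_compl_eq_zero hg_off,
          setIntegral_eq_integral_of_forall_compl_eq_zero hh_off]
        ring
    _ = ∫ x in Ω, ⟪f x, w x⟫ :=
        setIntegral_congr_fun hΩo.measurableSet fun x hx => (hinner x hx).symm

theorem sum_sq_sub_pd_eq {u v : E3 → E3} {x : E3} (hu : DifferentiableAt ℝ u x)
    (hv : DifferentiableAt ℝ v x) (P : Fin 3 → E3) :
    ∑ i, ∑ j, (P i j - pd v j x i) ^ 2 = gradDot (u - v) (u - v) x
      + ∑ i, ∑ j, (pd u j x i - P i j) ^ 2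
      - 2 * (gradDot u (u - v) x - ∑ i, ∑ j, pd (u - v) j x i * P i j) := by
  simp only [gradDot_eq_sum, pd_sub hu hv, PiLp.sub_apply, Finset.mul_sum,
    ← Finset.sum_add_distrib, ← Finset.sum_sub_distrib]
  exact Finset.sum_congr rfl fun i _ => Finset.sum_congr rfl fun j _ => by ring

theorem stmt_1_general (Ω : Set E3) (hΩo : IsOpen Ω) (hΩb : Bornology.IsBounded Ω)
    (f : E3 → E3)
    (u : E3 → E3) (hu : memV Ω u)
    (hstokes : ∀ v, memV Ω v → ∫ x in Ω, gradDot u v x = ∫ x in Ω, ⟪f x, v x⟫)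
    (p : E3 → Fin 3 → E3) (φ : E3 → ℝ)
    (hp : ∀ i, ContDiff ℝ 1 (fun y => p y i)) (hφ : ContDiff ℝ 1 φ)
    (heq : ∀ x ∈ Ω, ∀ i : Fin 3,
      divg (fun y => p y i) x + fderiv ℝ φ x (EuclideanSpace.single i 1) + f x i = 0)
    (v : E3 → E3) (hv : memV Ω v) :
    (∫ x in Ω, gradDot (u - v) (u - v) x)
      + (∫ x in Ω, ∑ i, ∑ j, (pd u j x i - p x i j) ^ 2)
      = ∫ x in Ω, ∑ i, ∑ j, (p x i j - pd v j x i) ^ 2 := by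
  have hw : memV Ω (u - v) := hu.sub hv
  have hcross : ∫ x in Ω, gradDot u (u - v) x
      = ∫ x in Ω, ∑ i, ∑ j, pd (u - v) j x i * p x i j := by
    rw [hstokes _ hw, setIntegral_sum_pd_mul_eq_setIntegral_inner hΩo hΩb f p φ hp hφ heq hw]
  have hu_C1 : ContDiff ℝ 1 u := hu.1
  have hw_C1 : ContDiff ℝ 1 (u - v) := hw.1
  have hint {F : E3 → ℝ} (hF : Continuous F) : IntegrableOn F Ω :=
    hF.integrableOn_of_isBounded hΩb
  symm
  calc ∫ x in Ω, ∑ i, ∑ j, (p x i j - pd v j x i) ^ 2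
      = ∫ x in Ω, (gradDot (u - v) (u - v) x + ∑ i, ∑ j, (pd u j x i - p x i j) ^ 2
          - 2 * (gradDot u (u - v) x - ∑ i, ∑ j, pd (u - v) j x i * p x i j)) :=
        integral_congr_ae (Filter.Eventually.of_forall fun x =>
          sum_sq_sub_pd_eq (hu_C1.differentiable one_ne_zero x)
            (hv.1.differentiable one_ne_zero x) _)
    _ = (∫ x in Ω, gradDot (u - v) (u - v) x)
          + (∫ x in Ω, ∑ i, ∑ j, (pd u j x i - p x i j) ^ 2)
          - 2 * ((∫ x in Ω, gradDot u (u - v) x)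
            - ∫ x in Ω, ∑ i, ∑ j, pd (u - v) j x i * p x i j) := by
        simp only [gradDot]
        rw [integral_sub (hint (by fun_prop)) (hint (by fun_prop)),
          integral_add (hint (by fun_prop)) (hint (by fun_prop)), integral_const_mul,
          integral_sub (hint (by fun_prop)) (hint (by fun_prop))]
    _ = _ := by rw [hcross]; ring

/-- Extended Prager–Synge theorem for the Stokes equation: if `u` solves the Stokes
problem for `f` and the matrix field `p` satisfies `div p + ∇φ + f = 0` on `Ω`
(row-wise), then the Pythagorean identity
`‖∇u − ∇v‖² + ‖∇u − p‖² = ‖p − ∇v‖²` holds for every `v ∈ V`. -/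
theorem stmt_1 (Ω : Set E3) (hΩo : IsOpen Ω) (hΩb : Bornology.IsBounded Ω)
    (f : E3 → E3) (hf : MemLp f 2 (volume.restrict Ω))
    (u : E3 → E3) (hu : memV Ω u)
    (hstokes : ∀ v, memV Ω v → ∫ x in Ω, gradDot u v x = ∫ x in Ω, ⟪f x, v x⟫)
    (p : E3 → Fin 3 → E3) (φ : E3 → ℝ)
    (hp : ∀ i, ContDiff ℝ 1 (fun y => p y i)) (hφ : ContDiff ℝ 1 φ)
    (heq : ∀ x ∈ Ω, ∀ i : Fin 3,
      divg (fun y => p y i) x + fderiv ℝ φ x (EuclideanSpace.single i 1) + f x i = 0)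
    (v : E3 → E3) (hv : memV Ω v) :
    (∫ x in Ω, gradDot (u - v) (u - v) x)
      + (∫ x in Ω, ∑ i, ∑ j, (pd u j x i - p x i j) ^ 2)
      = ∫ x in Ω, ∑ i, ∑ j, (p x i j - pd v j x i) ^ 2 :=
  stmt_1_general Ω hΩo hΩb f u hu hstokes p φ hp hφ heq v hv
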